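/- arXiv:1311.2629 — 2 statements merged into one kernel-verified Lean document; each statement's English description precedes it below -/
import Mathlib

section
/- Let $k$ be a field of characteristic $p$ and consider the truncated de Rham complex of $R = k[x]$: $0 \to k[x] \xrightarrow{d} k[x]\,dx \to 0$. Then the kernel of $d$ is $k[x^p]$ and the cokernel of $d$ is a free $k[x^p]$-module of rank one generated by the class of $x^{p-1} dx$. -/
open Polynomial

/-- Cartier isomorphism for the affine line: over a field `k` of characteristic `p > 0`,
in the de Rham complex `0 → k[x] → k[x]dx → 0`, the kernel of `d` is `k[x^p]`, and the
cokernel of `d` is a free `k[x^p]`-module of rank one generated by the class of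
`x^(p-1) dx`: every `g` is `d f + h(x^p)·x^(p-1)` for some `f, h`, and `h(x^p)·x^(p-1)`
lies in the image of `d` only when `h = 0`. -/
theorem de_rham_affine_line_cartier
    (p : ℕ) (hp : p.Prime) (k : Type*) [Field k] [CharP k p] :
    (∀ f : k[X], derivative f = 0 ↔ ∃ g : k[X], Polynomial.expand k p g = f) ∧
    (∀ g : k[X], ∃ f h : k[X],
        g = derivative f + Polynomial.expand k p h * X ^ (p - 1)) ∧
    (∀ h : k[X], (∃ f : k[X],
        Polynomial.expand k p h * X ^ (p - 1) = derivative f) → h = 0) := by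
  have hp0 : 0 < p := hp.pos
  refine ⟨?_, ?_, ?_⟩
  · intro f
    constructor
    · intro hf
      exact ⟨contract p f, expand_contract p hf hp.ne_zero⟩
    · rintro ⟨g, rfl⟩
      rw [derivative_expand]
      simp [CharP.cast_eq_zero k p]
  · intro g
    induction g using Polynomial.induction_on' with
    | add q r hq hr =>
      obtain ⟨f1, h1, e1⟩ := hq
      obtain ⟨f2, h2, e2⟩ := hr
      refine ⟨f1 + f2, h1 + h2, ?_⟩
      rw [e1, e2, map_add, map_add, add_mul]
      ring
    | monomial n a =>
      by_cases hdvd : p ∣ n + 1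
      · obtain ⟨m, hm⟩ := hdvd
        have hm' : m ≠ 0 := by rintro rfl; omega
        obtain ⟨m', rfl⟩ := Nat.exists_eq_succ_of_ne_zero hm'
        rw [Nat.mul_succ] at hm
        refine ⟨0, C a * X ^ m', ?_⟩
        rw [map_zero, zero_add, map_mul, expand_C, map_pow, expand_X, ← pow_mul, mul_assoc, ← pow_add]
        have hn : n = p * m' + (p - 1) := by omega
        rw [C_mul_X_pow_eq_monomial, ← hn]
      · have hne : ((n : k) + 1) ≠ 0 := by
          intro h
          have : ((n + 1 : ℕ) : k) = 0 := by push_cast; exact h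
          exact hdvd ((CharP.cast_eq_zero_iff k p _).mp this)
        refine ⟨C (a / (n + 1)) * X ^ (n + 1), 0, ?_⟩
        rw [map_zero, zero_mul, add_zero, derivative_C_mul_X_pow]
        rw [← C_mul_X_pow_eq_monomial]
        congr 1
        push_cast
        field_simp
  · intro h ⟨f, hf⟩
    ext m
    have := congrArg (fun q => Polynomial.coeff q (p * m + (p - 1))) hf
    simp only [coeff_mul_X_pow', coeff_derivative] at this
    rw [if_pos (by omega)] at this
    have hd : p * m + (p - 1) - (p - 1) = p * m := by omega
    rw [hd, Polynomial.coeff_expand hp0, if_pos ⟨m, rfl⟩, Nat.mul_div_cancel_left m hp0] at this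
    have hcast : ((p * m + (p - 1) : ℕ) : k) + 1 = 0 := by
      have : ((p * (m + 1) : ℕ) : k) = 0 := by
        rw [Nat.cast_mul, CharP.cast_eq_zero k p, zero_mul]
      have he : p * m + (p - 1) + 1 = p * (m + 1) := by rw [Nat.mul_add, Nat.mul_one]; omega
      calc ((p * m + (p - 1) : ℕ) : k) + 1 = ((p * m + (p - 1) + 1 : ℕ) : k) := by push_cast; ring
        _ = ((p * (m + 1) : ℕ) : k) := by rw [he]
        _ = 0 := this
    rw [hcast, mul_zero] at this
    simp [this]
end

section
/- Let $R$ be a commutative ring and $E$ a finitely generated faithful projective $R$-module. Then $\mathrm{End}_R(E)$ is an Azumaya algebra over $R$: the natural map $\mathrm{End}_R(E) \otimes_R \mathrm{End}_R(E)^{op} \to \mathrm{End}_R(\mathrm{End}_R(E))$ is an isomorphism. -/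
open TensorProduct

/-!
A finitely generated projective module has a dual basis `v = ∑ φ i v • e i`, and the rank-one
maps `u i j = φ j (-) • e i` then behave in `End_R E` like matrix units: `∑ u i i = 1` and
`u i j * x * u k l = φ j (x (e k)) • u i l`. In any algebra with such a family the classical
inverse from the matrix case, `G ↦ ∑ G (u j k) * u l j ⊗ u k l`, inverts the natural map.
-/

/-- The natural map `A ⊗[R] Aᵐᵒᵖ → End_R A`, sending `a ⊗ b` to `x ↦ a * x * b`. -/
noncomputable def azumayaMap (R A : Type*) [CommRing R] [Ring A] [Algebra R A] :
    A ⊗[R] Aᵐᵒᵖ →ₗ[R] Module.End R A :=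
  TensorProduct.lift
    (LinearMap.mk₂ R
      (fun a b => (LinearMap.mulRight R b.unop).comp (LinearMap.mulLeft R a))
      (fun a a' b => by
        ext x
        simp [add_mul])
      (fun r a b => by
        ext x
        simp [smul_mul_assoc])
      (fun a b b' => by
        ext x
        simp [mul_add])
      (fun r a b => by
        ext x
        simp [mul_smul_comm]))

theorem azumayaMap_tmul_apply {R A : Type*} [CommRing R] [Ring A] [Algebra R A]
    (a : A) (b : Aᵐᵒᵖ) (x : A) : azumayaMap R A (a ⊗ₜ b) x = a * x * b.unop := by
  simp [azumayaMap, mul_assoc]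

theorem Module.Projective.exists_dualBasis (R E : Type*) [CommSemiring R] [AddCommMonoid E]
    [Module R E] [Module.Finite R E] [Module.Projective R E] :
    ∃ (n : ℕ) (e : Fin n → E) (φ : Fin n → Module.Dual R E), ∀ v, ∑ i, φ i v • e i = v := by
  obtain ⟨n, f, g, -, -, hfg⟩ := Module.Finite.exists_comp_eq_id_of_projective R E
  refine ⟨n, fun i => f (Pi.single i 1), fun i => LinearMap.proj i ∘ₗ g, fun v => ?_⟩
  calc ∑ i, (LinearMap.proj i ∘ₗ g) v • f (Pi.single i 1)
      = f (∑ i, g v i • Pi.single i 1) := by simp [map_sum, map_smul]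
    _ = f (g v) := by rw [← pi_eq_sum_univ' (g v)]
    _ = v := congr($hfg v)

/-- A family `u i j` behaving like the matrix units of `Matrix ι ι R`, the entry `x j k` being
generalised to `c j k x`. -/
structure IsMatrixUnits {R A ι : Type*} [CommSemiring R] [Semiring A] [Algebra R A] [Fintype ι]
    (u : ι → ι → A) (c : ι → ι → A → R) : Prop where
  sum_diag : ∑ i, u i i = 1
  mul_mul : ∀ i j k l x, u i j * x * u k l = c j k x • u i l

theorem LinearMap.smulRight_mul_mul_smulRight {R E : Type*} [CommSemiring R] [AddCommMonoid E]
    [Module R E] (φ ψ : Module.Dual R E) (u v : E) (x : Module.End R E) :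
    φ.smulRight u * x * ψ.smulRight v = φ (x v) • ψ.smulRight u := by
  ext w
  simp [smul_smul, mul_comm]

theorem LinearMap.sum_smulRight_eq_one {R E : Type*} [CommSemiring R] [AddCommMonoid E]
    [Module R E] {ι : Type*} [Fintype ι] {e : ι → E} {φ : ι → Module.Dual R E}
    (h : ∀ v, ∑ i, φ i v • e i = v) : ∑ i, (φ i).smulRight (e i) = 1 := by
  ext v
  simp [h]

theorem Module.End.isMatrixUnits_of_dualBasis {R E : Type*} [CommSemiring R] [AddCommMonoid E]
    [Module R E] {ι : Type*} [Fintype ι] {e : ι → E} {φ : ι → Module.Dual R E}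
    (h : ∀ v, ∑ i, φ i v • e i = v) :
    IsMatrixUnits (fun i j => (φ j).smulRight (e i)) fun j k x => φ j (x (e k)) where
  sum_diag := LinearMap.sum_smulRight_eq_one h
  mul_mul i j k l := LinearMap.smulRight_mul_mul_smulRight (φ j) (φ l) (e i) (e k)

namespace IsMatrixUnits

open MulOpposite

variable {R A ι : Type*} [CommRing R] [Ring A] [Algebra R A] [Fintype ι]
  {u : ι → ι → A} {c : ι → ι → A → R}

theorem eq_sum_smul (hu : IsMatrixUnits u c) (x : A) :
    x = ∑ j, ∑ k, c j k x • u j k :=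
  calc x = (∑ j, u j j) * x * ∑ k, u k k := by rw [hu.sum_diag, one_mul, mul_one]
    _ = _ := by simp only [Finset.sum_mul, Finset.mul_sum, hu.mul_mul]; exact Finset.sum_comm

theorem sum_mul_mul (hu : IsMatrixUnits u c) (j k : ι) (x : A) :
    ∑ l, u l j * x * u k l = c j k x • 1 := by
  simp only [hu.mul_mul, ← Finset.smul_sum, hu.sum_diag]

variable (R u) in
/-- Summing `u l j * x * u k l` over `l` extracts the coefficient `c j k x` of
`x = ∑ c j k x • u j k`. -/
noncomputable def azumayaMapInv : Module.End R A →ₗ[R] A ⊗[R] Aᵐᵒᵖ :=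
  ∑ j, ∑ k, ∑ l, (TensorProduct.mk R A Aᵐᵒᵖ).flip (op (u k l)) ∘ₗ
    LinearMap.mulRight R (u l j) ∘ₗ LinearMap.applyₗ (u j k)

theorem azumayaMapInv_apply (G : Module.End R A) :
    azumayaMapInv R u G = ∑ j, ∑ k, ∑ l, (G (u j k) * u l j) ⊗ₜ op (u k l) := by
  simp [azumayaMapInv]

theorem azumayaMapInv_comp_azumayaMap (hu : IsMatrixUnits u c) :
    azumayaMapInv R u ∘ₗ azumayaMap R A = LinearMap.id := by
  refine TensorProduct.ext' fun a b => ?_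
  have collapse : ∀ k l, ∑ j, a * u j k * b.unop * u l j = c k l b.unop • a := fun k l =>
    calc ∑ j, a * u j k * b.unop * u l j = a * ∑ j, u j k * b.unop * u l j := by
          simp only [Finset.mul_sum, mul_assoc]
      _ = c k l b.unop • a := by rw [hu.sum_mul_mul, mul_smul_one]
  calc azumayaMapInv R u (azumayaMap R A (a ⊗ₜ b))
      = ∑ k, ∑ l, (c k l b.unop • a) ⊗ₜ op (u k l) := by
        simp only [azumayaMapInv_apply, azumayaMap_tmul_apply, ← collapse,
          TensorProduct.sum_tmul]
        rw [Finset.sum_comm]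
        exact Finset.sum_congr rfl fun _ _ => Finset.sum_comm
    _ = a ⊗ₜ b := by
        simp only [TensorProduct.smul_tmul, ← TensorProduct.tmul_sum, ← op_smul, ← Finset.op_sum,
          ← hu.eq_sum_smul, op_unop]

theorem azumayaMap_comp_azumayaMapInv (hu : IsMatrixUnits u c) :
    azumayaMap R A ∘ₗ azumayaMapInv R u = LinearMap.id := by
  ext G x
  calc azumayaMap R A (azumayaMapInv R u G) x
      = ∑ j, ∑ k, G (u j k) * ∑ l, u l j * x * u k l := by
        simp only [azumayaMapInv_apply, map_sum, LinearMap.sum_apply, azumayaMap_tmul_apply,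
          Finset.mul_sum, mul_assoc, unop_op]
    _ = G x := by
        simp only [hu.sum_mul_mul, mul_smul_one, ← map_smul,
          ← map_sum, ← hu.eq_sum_smul]

theorem azumayaMap_bijective (hu : IsMatrixUnits u c) :
    Function.Bijective (azumayaMap R A) :=
  Function.bijective_iff_has_inverse.mpr ⟨azumayaMapInv R u,
    LinearMap.congr_fun hu.azumayaMapInv_comp_azumayaMap,
    LinearMap.congr_fun hu.azumayaMap_comp_azumayaMapInv⟩

end IsMatrixUnits

theorem end_is_azumaya_general
    (R E : Type*) [CommRing R] [AddCommGroup E] [Module R E]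
    [Module.Finite R E] [Module.Projective R E] :
    Function.Bijective (azumayaMap R (Module.End R E)) := by
  obtain ⟨n, e, φ, hφe⟩ := Module.Projective.exists_dualBasis R E
  exact (Module.End.isMatrixUnits_of_dualBasis hφe).azumayaMap_bijective

/-- If `E` is a finitely generated faithful projective module over a commutative ring
`R`, then `End_R E` is an Azumaya algebra over `R`: the natural map
`End_R E ⊗[R] (End_R E)ᵐᵒᵖ → End_R (End_R E)`, sending `f ⊗ g` to `h ↦ f ∘ h ∘ g`,
is bijective. -/
theorem end_is_azumaya
    (R E : Type*) [CommRing R] [AddCommGroup E] [Module R E]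
    [Module.Finite R E] [Module.Projective R E] [FaithfulSMul R E] :
    Function.Bijective (azumayaMap R (Module.End R E)) :=
  end_is_azumaya_general R E
end
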